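/- For every integer k ≥ 1, the shallow vortex matching grid SVMG_k of order k contains a conformal subgraph isomorphic to the cylindrical matching grid CG_{2k} of order 2k. -/

import Mathlib

open SimpleGraph

namespace PaperMM

/-- A (finite, simple) graph bundled with its vertex type. -/
structure Graph : Type 1 where
  V : Type
  adj : SimpleGraph V

/-- `G` has a perfect matching. -/
def HasPM {V : Type} (G : SimpleGraph V) : Prop :=
  ∃ M : G.Subgraph, M.IsPerfectMatching

/-- `X ⊆ V(G)` is conformal: `G − X` has a perfect matching. -/
def ConformalSet {V : Type} (G : SimpleGraph V) (X : Set V) : Prop :=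
  HasPM (G.induce Xᶜ)

/-- The result of bicontracting the degree-2 vertex `v` with neighbours `u₀, u₁`:
the three vertices are identified into (the vertex previously called) `v`,
loops and parallel edges being suppressed. -/
def bicontractAt {V : Type} (G : SimpleGraph V) (v u₀ u₁ : V) :
    SimpleGraph {x : V // x ≠ u₀ ∧ x ≠ u₁} where
  Adj a b :=
    (a.1 ≠ v ∧ b.1 ≠ v ∧ G.Adj a.1 b.1) ∨
    (a.1 = v ∧ b.1 ≠ v ∧ (G.Adj b.1 u₀ ∨ G.Adj b.1 u₁)) ∨
    (b.1 = v ∧ a.1 ≠ v ∧ (G.Adj a.1 u₀ ∨ G.Adj a.1 u₁))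
  symm := by
    constructor
    rintro a b (⟨h1, h2, h3⟩ | ⟨h1, h2, h3⟩ | ⟨h1, h2, h3⟩)
    · exact Or.inl ⟨h2, h1, h3.symm⟩
    · exact Or.inr (Or.inr ⟨h1, h2, h3⟩)
    · exact Or.inr (Or.inl ⟨h1, h2, h3⟩)
  loopless := by
    constructor
    rintro a (⟨h1, _h2, h3⟩ | ⟨h1, h2, _h3⟩ | ⟨h1, h2, _h3⟩)
    · exact (G.ne_of_adj h3) rfl
    · exact h2 h1
    · exact h2 h1

/-- `H` is obtained from `G` by a single bicontraction of a vertex of degree two. -/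
def Bicontract (G H : Graph) : Prop :=
  ∃ v u₀ u₁ : G.V, u₀ ≠ u₁ ∧ G.adj.neighborSet v = {u₀, u₁} ∧
    Nonempty (H.adj ≃g bicontractAt G.adj v u₀ u₁)

/-- `H` is a matching minor of `G`: a graph isomorphic to `H` can be obtained from
a conformal subgraph of `G` by repeated bicontractions. -/
def IsMatchingMinor (H G : Graph) : Prop :=
  ∃ (H' : G.adj.Subgraph) (K : Graph),
    ConformalSet G.adj H'.verts ∧
    Relation.ReflTransGen Bicontract ⟨↥H'.verts, H'.coe⟩ K ∧
    Nonempty (H.adj ≃g K.adj)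

/-- The edge cut `∂(X)`: all edges of `G` with exactly one endpoint in `X`. -/
def edgeCut {V : Type} (G : SimpleGraph V) (X : Set V) : Set (Sym2 V) :=
  {e | e ∈ G.edgeSet ∧ ∃ a b : V, e = s(a, b) ∧ a ∈ X ∧ b ∉ X}

/-- `∂(X)` is a tight cut: every perfect matching contains exactly one of its edges. -/
def IsTightCut {V : Type} (G : SimpleGraph V) (X : Set V) : Prop :=
  ∀ M : G.Subgraph, M.IsPerfectMatching → (M.edgeSet ∩ edgeCut G X).ncard = 1

/-- `G` is matching covered: connected and every edge lies in a perfect matching. -/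
def MatchingCovered {V : Type} (G : SimpleGraph V) : Prop :=
  G.Connected ∧ ∀ e ∈ G.edgeSet, ∃ M : G.Subgraph, M.IsPerfectMatching ∧ e ∈ M.edgeSet

/-- `(V₁, V₂)` is a bipartition of `G` into two independent sets. -/
def IsBipartition {V : Type} (G : SimpleGraph V) (V₁ V₂ : Set V) : Prop :=
  V₁ ∪ V₂ = Set.univ ∧ V₁ ∩ V₂ = ∅ ∧
    ∀ a b : V, G.Adj a b → ((a ∈ V₁ ∧ b ∈ V₂) ∨ (a ∈ V₂ ∧ b ∈ V₁))

def IsBipartiteGraph {V : Type} (G : SimpleGraph V) : Prop :=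
  ∃ V₁ V₂ : Set V, IsBipartition G V₁ V₂

/-- A brace: a bipartite matching covered graph with no non-trivial tight cut. -/
def IsBrace {V : Type} (G : SimpleGraph V) : Prop :=
  IsBipartiteGraph G ∧ MatchingCovered G ∧
    ¬ ∃ X : Set V, IsTightCut G X ∧ 2 ≤ X.ncard ∧ 2 ≤ Xᶜ.ncard

/-- A perfect matching decomposition: a cubic tree `tree` together with a bijection
from its leaves to the vertices of `G`. -/
structure PMDecomp {V : Type} (G : SimpleGraph V) where
  T : Type
  tree : SimpleGraph T
  isTree : tree.IsTree
  cubic : ∀ t : T, (tree.neighborSet t).ncard = 1 ∨ (tree.neighborSet t).ncard = 3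
  leafEquiv : {t : T // (tree.neighborSet t).ncard = 1} ≃ V

/-- The side of the partition of `V(G)` induced by the tree edge `{t₁, t₂}`
corresponding to `t₁`. -/
def PMDecomp.sideSet {V : Type} {G : SimpleGraph V} (D : PMDecomp G) (t₁ t₂ : D.T) :
    Set V :=
  {v | (D.tree.deleteEdges {s(t₁, t₂)}).Reachable t₁ (D.leafEquiv.symm v).1}

/-- The matching porosity of `X`: the maximum number of edges of `∂(X)` in a
perfect matching of `G`. -/
noncomputable def matchingPorosity {V : Type} (G : SimpleGraph V) (X : Set V) : ℕ :=
  sSup {n | ∃ M : G.Subgraph, M.IsPerfectMatching ∧ n = (M.edgeSet ∩ edgeCut G X).ncard}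

/-- The width of a perfect matching decomposition. -/
noncomputable def PMDecomp.width {V : Type} {G : SimpleGraph V} (D : PMDecomp G) : ℕ :=
  sSup {n | ∃ t₁ t₂ : D.T, D.tree.Adj t₁ t₂ ∧ n = matchingPorosity G (D.sideSet t₁ t₂)}

/-- The perfect matching width of `G`. -/
noncomputable def pmw {V : Type} (G : SimpleGraph V) : ℕ :=
  sInf {w | ∃ D : PMDecomp G, D.width ≤ w}

/-! ### Concrete graphs -/

/-- The `(n × m)`-grid. -/
def gridGraph (n m : ℕ) : SimpleGraph (Fin n × Fin m) :=
  SimpleGraph.fromRel (fun p q =>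
    (p.1 = q.1 ∧ p.2.1 + 1 = q.2.1) ∨ (p.2 = q.2 ∧ p.1.1 + 1 = q.1.1))

/-- The single-crossing matching grid of order `k`: the `(2k × 2k)`-grid whose
central 4-cycle (`(k,k),(k,k+1),(k+1,k+1),(k+1,k)` in 1-based coordinates) is
identified with a 4-cycle of `K_{3,3}`; `Sum.inr 0` and `Sum.inr 1` are the two
remaining vertices of `K_{3,3}`. -/
def singleCrossingMatchingGrid (k : ℕ) :
    SimpleGraph ((Fin (2*k) × Fin (2*k)) ⊕ Fin 2) :=
  SimpleGraph.fromRel (fun x y =>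
    (∃ p q : Fin (2*k) × Fin (2*k), x = Sum.inl p ∧ y = Sum.inl q ∧
      ((p.1 = q.1 ∧ p.2.1 + 1 = q.2.1) ∨ (p.2 = q.2 ∧ p.1.1 + 1 = q.1.1))) ∨
    (∃ p : Fin (2*k) × Fin (2*k), x = Sum.inl p ∧ y = Sum.inr 0 ∧
      ((p.1.1 = k - 1 ∧ p.2.1 = k) ∨ (p.1.1 = k ∧ p.2.1 = k - 1))) ∨
    (∃ p : Fin (2*k) × Fin (2*k), x = Sum.inl p ∧ y = Sum.inr 1 ∧
      ((p.1.1 = k - 1 ∧ p.2.1 = k - 1) ∨ (p.1.1 = k ∧ p.2.1 = k))) ∨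
    (x = Sum.inr 0 ∧ y = Sum.inr 1))

/-- The inside-out single-crossing matching grid of order `k`: the `(2k × 2k)`-grid
together with the two remaining vertices of a `K_{3,3}` whose chosen 4-cycle has been
identified with the four corners (its edges being deleted). -/
def insideOutSingleCrossingMatchingGrid (k : ℕ) :
    SimpleGraph ((Fin (2*k) × Fin (2*k)) ⊕ Fin 2) :=
  SimpleGraph.fromRel (fun x y =>
    (∃ p q : Fin (2*k) × Fin (2*k), x = Sum.inl p ∧ y = Sum.inl q ∧
      ((p.1 = q.1 ∧ p.2.1 + 1 = q.2.1) ∨ (p.2 = q.2 ∧ p.1.1 + 1 = q.1.1))) ∨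
    (∃ p : Fin (2*k) × Fin (2*k), x = Sum.inl p ∧ y = Sum.inr 0 ∧
      ((p.1.1 = 0 ∧ p.2.1 = 2*k - 1) ∨ (p.1.1 = 2*k - 1 ∧ p.2.1 = 0))) ∨
    (∃ p : Fin (2*k) × Fin (2*k), x = Sum.inl p ∧ y = Sum.inr 1 ∧
      ((p.1.1 = 0 ∧ p.2.1 = 0) ∨ (p.1.1 = 2*k - 1 ∧ p.2.1 = 2*k - 1))) ∨
    (x = Sum.inr 0 ∧ y = Sum.inr 1))

/-- The cylindrical matching grid `CG_k` of order `k` (0-based coordinates: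
vertex `(i, j)` is `v_{j+1}^{i+1}` of the paper). -/
def cylindricalMatchingGrid (k : ℕ) : SimpleGraph (Fin k × Fin (4*k)) :=
  SimpleGraph.fromRel (fun x y =>
    (x.1 = y.1 ∧ (x.2.1 + 1) % (4*k) = y.2.1) ∨
    (x.1.1 + 1 = y.1.1 ∧ x.2.1 % 4 = 0 ∧ x.2.1 + 1 = y.2.1) ∨
    (y.1.1 + 1 = x.1.1 ∧ x.2.1 % 4 = 2 ∧ x.2.1 + 1 = y.2.1))

/-- The edges of the canonical matching of `CG_k`. -/
def cmgCanonicalEdges (k : ℕ) : Set (Sym2 (Fin k × Fin (4*k))) :=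
  {e | ∃ x y : Fin k × Fin (4*k), e = s(x, y) ∧ x.1 = y.1 ∧
        x.2.1 % 2 = 0 ∧ x.2.1 + 1 = y.2.1}

/-- The edges of the alternating matching of `CG_k` (for `k` even): the canonical
matching with `M ∩ E(C_i)` replaced by `E(C_i) ∖ M` on every odd (1-based) cycle. -/
def cmgAlternatingEdges (k : ℕ) : Set (Sym2 (Fin k × Fin (4*k))) :=
  {e | ∃ x y : Fin k × Fin (4*k), e = s(x, y) ∧ x.1 = y.1 ∧
        (x.2.1 + 1) % (4*k) = y.2.1 ∧ (x.1.1 + x.2.1) % 2 = 1}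

/-- The cylindrical single-crossing grid of order `h`: `CG_{4h}` plus the two
crossing edges `v^1_1 v^1_{8h+4}` and `v^1_{4h+1} v^1_{12h+4}`. -/
def cylindricalSingleCrossingGrid (h : ℕ) :
    SimpleGraph (Fin (4*h) × Fin (4*(4*h))) :=
  cylindricalMatchingGrid (4*h) ⊔ SimpleGraph.fromRel (fun x y =>
    x.1.1 = 0 ∧ y.1.1 = 0 ∧
      ((x.2.1 = 0 ∧ y.2.1 = 8*h + 3) ∨ (x.2.1 = 4*h ∧ y.2.1 = 12*h + 3)))

/-- The cylindrical single-jump grid of order `k`: `CG_k` plus the edge `v^k_1 v^1_2`. -/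
def cylindricalSingleJumpGrid (k : ℕ) : SimpleGraph (Fin k × Fin (4*k)) :=
  cylindricalMatchingGrid k ⊔ SimpleGraph.fromRel (fun x y =>
    x.1.1 = k - 1 ∧ x.2.1 = 0 ∧ y.1.1 = 0 ∧ y.2.1 = 1)

/-- The shallow vortex matching grid `SVMG_k` of order `k`. -/
def shallowVortexMatchingGrid (k : ℕ) : SimpleGraph (Fin (2*k) × Fin (8*k)) :=
  SimpleGraph.fromRel (fun x y =>
    (x.1 = y.1 ∧ (x.2.1 + 1) % (8*k) = y.2.1) ∨
    (x.1.1 + 1 = y.1.1 ∧ x.2.1 % 4 = 0 ∧ x.2.1 + 1 = y.2.1) ∨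
    (y.1.1 + 1 = x.1.1 ∧ x.2.1 % 4 = 2 ∧ x.2.1 + 1 = y.2.1) ∨
    (x.1.1 = 0 ∧ y.1.1 = 0 ∧ x.2.1 % 4 = 1 ∧ (x.2.1 + 5) % (8*k) = y.2.1))

/-- The refined vortex `RV_k` of order `k`. -/
def refinedVortex (k : ℕ) : SimpleGraph (Fin (2*k) × Fin (4*k)) :=
  SimpleGraph.fromRel (fun x y =>
    (x.1 = y.1 ∧ (x.2.1 + 1) % (4*k) = y.2.1) ∨
    (x.1.1 + 1 = y.1.1 ∧ x.2 = y.2) ∨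
    (x.1.1 = 0 ∧ y.1.1 = 0 ∧ x.2.1 % 4 = 1 ∧ (x.2.1 + 3) % (4*k) = y.2.1))

/-- The (ordinary) single-crossing grid of order `n`: the `(2n × 2n)`-grid plus the
two crossing edges `{(n,n),(n+1,n+1)}` and `{(n,n+1),(n+1,n)}` (1-based). -/
def singleCrossingGrid (n : ℕ) : SimpleGraph (Fin (2*n) × Fin (2*n)) :=
  gridGraph (2*n) (2*n) ⊔ SimpleGraph.fromRel (fun p q =>
    (p.1.1 = n - 1 ∧ p.2.1 = n - 1 ∧ q.1.1 = n ∧ q.2.1 = n) ∨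
    (p.1.1 = n - 1 ∧ p.2.1 = n ∧ q.1.1 = n ∧ q.2.1 = n - 1))

/-! ### M-conformality -/

/-- `X` is `M`-conformal: every vertex outside `X` is matched by `M` to a vertex
outside `X`, i.e. `M ∩ E(G − X)` is a perfect matching of `G − X`. -/
def MConformalSet {V : Type} {G : SimpleGraph V} (M : G.Subgraph) (X : Set V) : Prop :=
  ∀ v ∈ Xᶜ, ∃ w ∈ Xᶜ, M.Adj v w

/-- A walk is internally `M`-conformal: it alternates between edges outside `M`
and edges of `M`, starting and ending with edges not in `M`. -/
def InternallyMConformal {V : Type} {G : SimpleGraph V} (M : G.Subgraph)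
    {a b : V} (P : G.Walk a b) : Prop :=
  ∀ (i : ℕ) (h : i < P.edges.length), (P.edges.get ⟨i, h⟩ ∈ M.edgeSet ↔ i % 2 = 1)

/-! ### Subdivisions -/

/-- A model of a subdivision of `H` inside `B`: branch vertices together with
internally disjoint paths representing the edges of `H`. -/
structure SubdivisionModel {V U : Type} (B : SimpleGraph V) (H : SimpleGraph U) where
  branch : U → V
  branch_inj : Function.Injective branch
  path : ∀ ⦃u w : U⦄, H.Adj u w → B.Walk (branch u) (branch w)
  path_isPath : ∀ ⦃u w : U⦄ (h : H.Adj u w), (path h).IsPath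
  path_symm : ∀ ⦃u w : U⦄ (h : H.Adj u w), path h.symm = (path h).reverse
  branch_meet : ∀ ⦃u w : U⦄ (h : H.Adj u w) (z : U),
      branch z ∈ (path h).support → z = u ∨ z = w
  path_disjoint : ∀ ⦃u w u' w' : U⦄ (h : H.Adj u w) (h' : H.Adj u' w'),
      s(u, w) ≠ s(u', w') → ∀ x : V, x ∈ (path h).support → x ∈ (path h').support →
        (x = branch u ∨ x = branch w) ∧ (x = branch u' ∨ x = branch w')

/-- The vertices of the subdivision in the host graph. -/
def SubdivisionModel.verts {V U : Type} {B : SimpleGraph V} {H : SimpleGraph U}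
    (S : SubdivisionModel B H) : Set V :=
  {x | ∃ u w : U, ∃ h : H.Adj u w, x ∈ (S.path h).support}

/-- The edges of the subdivision in the host graph. -/
def SubdivisionModel.edges' {V U : Type} {B : SimpleGraph V} {H : SimpleGraph U}
    (S : SubdivisionModel B H) : Set (Sym2 V) :=
  {e | ∃ u w : U, ∃ h : H.Adj u w, e ∈ (S.path h).edges}

/-- A model of a bisubdivision: every edge of `H` is replaced by a path of odd
length (i.e. every edge is subdivided an even number of times). -/
structure BisubdivisionModel {V U : Type} (B : SimpleGraph V) (H : SimpleGraph U)
    extends SubdivisionModel B H where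
  path_odd : ∀ ⦃u w : U⦄ (h : H.Adj u w), Odd (path h).length

/-- `M` contains the canonical matching of the (bi)subdivision `S` of `CG_N`:
`M ∩ E(W)` is a perfect matching of `W` in which every branch vertex is matched
along the subdivided image of the canonical-matching edge at the corresponding
grid vertex. -/
def ContainsCanonical {V : Type} {B : SimpleGraph V} {N : ℕ}
    (S : SubdivisionModel B (cylindricalMatchingGrid N)) (M : B.Subgraph) : Prop :=
  (∀ x ∈ S.verts, ∃ y ∈ S.verts, M.Adj x y ∧ s(x, y) ∈ S.edges') ∧
  (∀ (u : Fin N × Fin (4*N)) (y : V), M.Adj (S.branch u) y →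
    ∃ w : Fin N × Fin (4*N), ∃ h : (cylindricalMatchingGrid N).Adj u w,
      s(u, w) ∈ cmgCanonicalEdges N ∧ s(S.branch u, y) ∈ (S.path h).edges)

/-- The vertex set, in the host graph, of the subdivided image of the `j`-th
(0-based) concentric cycle of `CG_N`. -/
def cycVerts {V : Type} {B : SimpleGraph V} {N : ℕ}
    (S : SubdivisionModel B (cylindricalMatchingGrid N)) (j : ℕ) : Set V :=
  {x | ∃ u w : Fin N × Fin (4*N), ∃ h : (cylindricalMatchingGrid N).Adj u w,
      u.1.1 = j ∧ w.1.1 = j ∧ x ∈ (S.path h).support}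

/-! ### Separations, minors, connectivity -/

/-- `(A, B)` is a separation of `G`. -/
def IsSeparation {V : Type} (G : SimpleGraph V) (A B : Set V) : Prop :=
  A ∪ B = Set.univ ∧ ∀ a b : V, G.Adj a b → a ∈ A \ B → b ∉ B \ A

/-- `H` is a minor of `G` (branch-set model). -/
def IsMinor {U V : Type} (H : SimpleGraph U) (G : SimpleGraph V) : Prop :=
  ∃ φ : U → Set V,
    (∀ u, (φ u).Nonempty) ∧
    (∀ u, ∀ x, ∀ hx : x ∈ φ u, ∀ y, ∀ hy : y ∈ φ u,
      (G.induce (φ u)).Reachable ⟨x, hx⟩ ⟨y, hy⟩) ∧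
    (Pairwise fun u w => Disjoint (φ u) (φ w)) ∧
    (∀ u w : U, H.Adj u w → ∃ x ∈ φ u, ∃ y ∈ φ w, G.Adj x y)

/-- `G` is quasi-4-connected: 3-connected and every separation of order 3 has a
side containing at most one extra vertex. -/
def QuasiFourConnected {V : Type} (G : SimpleGraph V) : Prop :=
  (4 ≤ Nat.card V ∧
    ∀ A B : Set V, IsSeparation G A B → (A ∩ B).ncard ≤ 2 → A ⊆ B ∨ B ⊆ A) ∧
  (∀ A B : Set V, IsSeparation G A B → (A ∩ B).ncard = 3 →
    (A \ B).ncard ≤ 1 ∨ (B \ A).ncard ≤ 1)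

/-! ### Walls -/

/-- The `(2n × n)`-grid with every odd edge of every odd column and every even edge
of every even column deleted (1-based parities). -/
def preWall (n : ℕ) : SimpleGraph (Fin (2*n) × Fin n) :=
  SimpleGraph.fromRel (fun p q =>
    (p.1 = q.1 ∧ p.2.1 + 1 = q.2.1) ∨
    (p.2 = q.2 ∧ p.1.1 + 1 = q.1.1 ∧ ¬ p.1.1 % 2 = p.2.1 % 2))

/-- The vertices of the elementary `n`-wall: all vertices of `preWall n` of degree
at least two. -/
def elementaryWallVerts (n : ℕ) : Set (Fin (2*n) × Fin n) :=
  {v | 2 ≤ ((preWall n).neighborSet v).ncard}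

/-- The elementary `n`-wall. -/
def elementaryWall (n : ℕ) : SimpleGraph ↥(elementaryWallVerts n) :=
  (preWall n).induce (elementaryWallVerts n)

/-- The vertices on the perimeter of the elementary `n`-wall. -/
def wallPerimSet (n : ℕ) : Set (Fin (2*n) × Fin n) :=
  {v | v.1.1 = 0 ∨ v.1.1 = 2*n - 1 ∨ v.2.1 = 0 ∨ v.2.1 = n - 1}

/-- The (1-based) index of the concentric cycle of the centred layering of the
elementary `n`-wall containing a given vertex. -/
def wallRingIdx (n : ℕ) (v : Fin (2*n) × Fin n) : ℕ :=
  max ((if v.1.1 < n then n - 1 - v.1.1 else v.1.1 - n) / 2)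
      (if v.2.1 < n / 2 then n / 2 - 1 - v.2.1 else v.2.1 - n / 2) + 1

/-- The vertex set, in the host graph, of the `r`-th concentric cycle of a wall
given by a subdivision model. -/
def wallRingVertsG {V : Type} {G : SimpleGraph V} {n : ℕ}
    (S : SubdivisionModel G (elementaryWall n)) (r : ℕ) : Set V :=
  {x | ∃ u w, ∃ h : (elementaryWall n).Adj u w,
      wallRingIdx n u.1 = r ∧ wallRingIdx n w.1 = r ∧ x ∈ (S.path h).support}

/-- The vertex set, in the host graph, of the union of the first `r` concentric
cycles of a wall given by a subdivision model. -/
def wallInnerVertsG {V : Type} {G : SimpleGraph V} {n : ℕ}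
    (S : SubdivisionModel G (elementaryWall n)) (r : ℕ) : Set V :=
  {x | ∃ u w, ∃ h : (elementaryWall n).Adj u w,
      wallRingIdx n u.1 = wallRingIdx n w.1 ∧ wallRingIdx n u.1 ≤ r ∧
      x ∈ (S.path h).support}

/-- The vertex set, in the host graph, of the perimeter of a wall given by a
subdivision model. -/
def wallPerimVertsG {V : Type} {G : SimpleGraph V} {n : ℕ}
    (S : SubdivisionModel G (elementaryWall n)) : Set V :=
  {x | ∃ u w, ∃ h : (elementaryWall n).Adj u w,
      u.1 ∈ wallPerimSet n ∧ w.1 ∈ wallPerimSet n ∧ x ∈ (S.path h).support}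

/-- The (1-based) index of the concentric cycle of the centred layering of the
`(n × n)`-grid (`n` even) containing a given vertex. -/
def gridRing (n : ℕ) (p : Fin n × Fin n) : ℕ :=
  max (if p.1.1 < n / 2 then n / 2 - 1 - p.1.1 else p.1.1 - n / 2)
      (if p.2.1 < n / 2 then n / 2 - 1 - p.2.1 else p.2.1 - n / 2) + 1

/-! ### Matrices and permanents -/

/-- The permanent of an `n × n` matrix of naturals. -/
def perm (n : ℕ) (A : Matrix (Fin n) (Fin n) ℕ) : ℕ :=
  ∑ σ : Equiv.Perm (Fin n), ∏ i : Fin n, A i (σ i)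

/-- The bipartite graph `B(A)` associated with a 0/1 matrix `A`: two copies of
`{1,…,n}`, with `uᵢ` adjacent to `wⱼ` iff `A i j = 1`. -/
def matrixGraph (n : ℕ) (A : Matrix (Fin n) (Fin n) ℕ) :
    SimpleGraph (Fin n ⊕ Fin n) :=
  SimpleGraph.fromRel (fun x y => ∃ i j : Fin n, x = Sum.inl i ∧ y = Sum.inr j ∧ A i j = 1)

/-- The last index of `Fin n` (row/column `n`). -/
def lastIdx (n : ℕ) (_hn : 2 ≤ n) : Fin n := ⟨n - 1, by omega⟩

/-- The second-to-last index of `Fin n` (row/column `n − 1`). -/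
def sndIdx (n : ℕ) (_hn : 2 ≤ n) : Fin n := ⟨n - 2, by omega⟩

/-- The bicontraction of `A` at its last row: replace column `n−1` by the entrywise
maximum of columns `n−1` and `n`, then delete row `n` and column `n`. -/
def bicontractMatrix (n : ℕ) (hn : 2 ≤ n) (A : Matrix (Fin n) (Fin n) ℕ) :
    Matrix (Fin (n-1)) (Fin (n-1)) ℕ :=
  fun j i =>
    if (i : ℕ) = n - 2 then
      max (A (Fin.castLE (Nat.sub_le n 1) j) (sndIdx n hn))
          (A (Fin.castLE (Nat.sub_le n 1) j) (lastIdx n hn))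
    else A (Fin.castLE (Nat.sub_le n 1) j) (Fin.castLE (Nat.sub_le n 1) i)

end PaperMM
namespace PaperMM

/-! Deleting the crossing edges of `SVMG_k` leaves exactly `CG_{2k}`: the cycles have length
`8k = 4 · (2k)` and the remaining edges are those of the cylindrical grid. This subgraph is
spanning, hence conformal, since deleting all vertices leaves the empty graph, which is
perfectly matched by its empty matching. -/

def svmgIndexEquiv (k : ℕ) : Fin (2*k) × Fin (8*k) ≃ Fin (2*k) × Fin (4*(2*k)) :=
  Equiv.prodCongr (Equiv.refl _) (finCongr (by ring))

theorem conformalSet_univ {V : Type} (G : SimpleGraph V) : ConformalSet G Set.univ :=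
  ⟨⊤, fun v _ => absurd (Set.mem_univ v.1) v.2, fun _ => Set.mem_univ _⟩

theorem exists_conformal_subgraph_iso_of_comap_le {V U : Type} {G : SimpleGraph V}
    {H : SimpleGraph U} (e : V ≃ U) (h : H.comap e ≤ G) :
    ∃ W : G.Subgraph, ConformalSet G W.verts ∧ Nonempty (W.coe ≃g H) :=
  ⟨toSubgraph (H.comap e) h, conformalSet_univ G,
    ⟨(Subgraph.spanningCoeEquivCoeOfSpanning _ (toSubgraph.isSpanning _ h)).symm.trans
      (Iso.comap e H)⟩⟩

theorem cylindricalMatchingGrid_comap_le_shallowVortexMatchingGrid (k : ℕ) :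
    (cylindricalMatchingGrid (2*k)).comap (svmgIndexEquiv k) ≤ shallowVortexMatchingGrid k := by
  rintro ⟨a₁, a₂⟩ ⟨b₁, b₂⟩ hab
  have h8k : 4 * (2 * k) = 8 * k := by ring
  simp only [comap_adj, cylindricalMatchingGrid, fromRel_adj, svmgIndexEquiv,
    Equiv.prodCongr_apply, Prod.map, Equiv.refl_apply, finCongr_apply, Fin.val_cast, h8k] at hab
  simp only [shallowVortexMatchingGrid, fromRel_adj]
  obtain ⟨hne, hadj⟩ := hab
  refine ⟨fun h => hne (by cases h; rfl), ?_⟩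
  rcases hadj with (h | h | h) | (h | h | h)
  all_goals simp only [h, true_and, true_or, or_true]

theorem statement14_general (k : ℕ) :
    ∃ W : (shallowVortexMatchingGrid k).Subgraph,
      ConformalSet (shallowVortexMatchingGrid k) W.verts ∧
      Nonempty (W.coe ≃g cylindricalMatchingGrid (2*k)) :=
  exists_conformal_subgraph_iso_of_comap_le (svmgIndexEquiv k)
    (cylindricalMatchingGrid_comap_le_shallowVortexMatchingGrid k)

/-- For every `k ≥ 1`, the shallow vortex matching grid `SVMG_k`
contains a conformal subgraph isomorphic to the cylindrical matching grid `CG_{2k}`. -/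
theorem statement14 (k : ℕ) (hk : 1 ≤ k) :
    ∃ W : (shallowVortexMatchingGrid k).Subgraph,
      ConformalSet (shallowVortexMatchingGrid k) W.verts ∧
      Nonempty (W.coe ≃g cylindricalMatchingGrid (2*k)) :=
  statement14_general k

end PaperMM
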